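/- arXiv:1804.08885 — 2 statements merged into one kernel-verified Lean document; each statement's English description precedes it below -/
import Mathlib

section
/- Let t ≥ t' ≥ 0, let H be a t'-boundaried X-labeled graph, and let G be a t-boundaried X-labeled graph such that H is a boundaried labeled minor of forget(G, t'). Then there exists H' ∈ ext_{+(t−t')}(H) such that H' is a boundaried labeled minor of G. -/
namespace FDel

open scoped Classical

noncomputable section

/-- A boundaried `X`-labeled graph on the vertex universe `ℕ`: a (finite) vertex set,
a symmetric loopless adjacency relation, a labelset for each vertex, and a partial
assignment of boundary indices to vertices. -/
structure BLG (X : Type) where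
  verts : Set ℕ
  Adj : ℕ → ℕ → Prop
  label : ℕ → Set X
  bnd : ℕ → Option ℕ

variable {X : Type}

/-- Well-formedness of `G` as a `t`-boundaried `X`-labeled graph: the vertex set is finite,
adjacency is symmetric, loopless and supported on the vertex set, labels and boundary
indices live on vertices, the boundary assignment is injective, and indices lie in `{1,…,t}`. -/
def BLG.WF (t : ℕ) (G : BLG X) : Prop :=
  G.verts.Finite ∧
  (∀ u v, G.Adj u v → G.Adj v u) ∧
  (∀ v, ¬ G.Adj v v) ∧
  (∀ u v, G.Adj u v → u ∈ G.verts ∧ v ∈ G.verts) ∧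
  (∀ v, v ∉ G.verts → G.label v = ∅ ∧ G.bnd v = none) ∧
  (∀ u v i, G.bnd u = some i → G.bnd v = some i → u = v) ∧
  (∀ v i, G.bnd v = some i → v ∈ G.verts ∧ 1 ≤ i ∧ i ≤ t)

/-- Reachability inside the vertex set `S`. -/
def ReachIn (G : BLG X) (S : Set ℕ) (a b : ℕ) : Prop :=
  Relation.ReflTransGen (fun u v => G.Adj u v ∧ u ∈ S ∧ v ∈ S) a b

/-- `C` is (the vertex set of) a connected component of the subgraph of `G` induced by `S`. -/
def IsCompOf (G : BLG X) (S C : Set ℕ) : Prop :=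
  ∃ v ∈ S, C = {w | w ∈ S ∧ ReachIn G S v w}

/-- `G` is connected (and nonempty). -/
def BLG.Conn (G : BLG X) : Prop :=
  G.verts.Nonempty ∧ ∀ a ∈ G.verts, ∀ b ∈ G.verts, ReachIn G G.verts a b

/-- Isomorphism of boundaried labeled graphs: a bijection of the vertex sets preserving
adjacency, labelsets and boundary indices. -/
def Iso (G G' : BLG X) : Prop :=
  ∃ f : ℕ → ℕ, Set.BijOn f G.verts G'.verts ∧
    (∀ u ∈ G.verts, ∀ v ∈ G.verts, (G.Adj u v ↔ G'.Adj (f u) (f v))) ∧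
    (∀ v ∈ G.verts, G'.label (f v) = G.label v) ∧
    (∀ v ∈ G.verts, G'.bnd (f v) = G.bnd v)

/-- A boundaried labeled minor model of `H` in `G`. -/
structure MinorModel (H G : BLG X) (φ : ℕ → Set ℕ) : Prop where
  sub : ∀ v ∈ H.verts, φ v ⊆ G.verts
  nonempty : ∀ v ∈ H.verts, (φ v).Nonempty
  conn : ∀ v ∈ H.verts, ∀ a ∈ φ v, ∀ b ∈ φ v, ReachIn G (φ v) a b
  disj : ∀ u ∈ H.verts, ∀ v ∈ H.verts, u ≠ v → Disjoint (φ u) (φ v)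
  edge : ∀ u ∈ H.verts, ∀ v ∈ H.verts, H.Adj u v → ∃ a ∈ φ u, ∃ b ∈ φ v, G.Adj a b
  bnd_none : ∀ v ∈ H.verts, H.bnd v = none → ∀ a ∈ φ v, G.bnd a = none
  bnd_some : ∀ v ∈ H.verts, ∀ i, H.bnd v = some i →
    (∀ a ∈ φ v, G.bnd a = none ∨ G.bnd a = some i) ∧ ∃ a ∈ φ v, G.bnd a = some i
  labels : ∀ v ∈ H.verts, ∀ x, x ∈ H.label v → ∃ a ∈ φ v, x ∈ G.label a

/-- `H` is a boundaried labeled minor of `G`. -/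
def Minor (H G : BLG X) : Prop := ∃ φ, MinorModel H G φ

/-- Auxiliary injection for the right summand of `⊕`: a vertex of `G2` that is a boundary
vertex whose index also occurs in `G1` is identified with the corresponding vertex of `G1`. -/
def rmap (G1 G2 : BLG X) (v : ℕ) : ℕ :=
  if h : ∃ u, u ∈ G1.verts ∧ ∃ i, G2.bnd v = some i ∧ G1.bnd u = some i
  then 2 * Classical.choose h
  else 2 * v + 1

/-- The sum `G1 ⊕ G2`: disjoint union with boundary vertices of equal index identified. -/
def glue (G1 G2 : BLG X) : BLG X where
  verts := (fun v => 2 * v) '' G1.verts ∪ rmap G1 G2 '' G2.verts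
  Adj a b :=
    (∃ u ∈ G1.verts, ∃ v ∈ G1.verts, G1.Adj u v ∧ a = 2 * u ∧ b = 2 * v) ∨
    (∃ u ∈ G2.verts, ∃ v ∈ G2.verts, G2.Adj u v ∧ a = rmap G1 G2 u ∧ b = rmap G1 G2 v)
  label x := {l | (∃ v ∈ G1.verts, x = 2 * v ∧ l ∈ G1.label v) ∨
                  (∃ v ∈ G2.verts, x = rmap G1 G2 v ∧ l ∈ G2.label v)}
  bnd x :=
    if x ∈ (fun v => 2 * v) '' G1.verts ∪ rmap G1 G2 '' G2.verts then
      (if x % 2 = 0 then G1.bnd (x / 2) else G2.bnd (x / 2))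
    else none

/-- One-vertex piece on vertex `v`, with boundary index `i` and labelset `L`. -/
def singlePc (v i : ℕ) (L : Set X) : BLG X :=
  ⟨{v}, fun _ _ => False, fun x => if x = v then L else ∅,
   fun x => if x = v then some i else none⟩

/-- Two-vertex piece consisting of the single edge `{u,v}` with boundary indices `i`, `j`. -/
def edgePc (u v i j : ℕ) : BLG X :=
  ⟨{u, v}, fun a b => (a = u ∧ b = v) ∨ (a = v ∧ b = u), fun _ => ∅,
   fun x => if x = u then some i else if x = v then some j else none⟩

/-- The non-boundary vertices of `G`. -/
def interior (G : BLG X) : Set ℕ := {v | v ∈ G.verts ∧ G.bnd v = none}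

/-- The piece of `G` corresponding to a connected component `C` of `G − δ(G)`: `C` together
with its neighboring boundary vertices, with edges between boundary vertices removed and all
labels removed from boundary vertices. -/
def compPc (G : BLG X) (C : Set ℕ) : BLG X :=
  ⟨C ∪ {v | v ∈ G.verts ∧ G.bnd v ≠ none ∧ ∃ c ∈ C, G.Adj v c},
   fun a b => G.Adj a b ∧
     (a ∈ C ∪ {v | v ∈ G.verts ∧ G.bnd v ≠ none ∧ ∃ c ∈ C, G.Adj v c}) ∧
     (b ∈ C ∪ {v | v ∈ G.verts ∧ G.bnd v ≠ none ∧ ∃ c ∈ C, G.Adj v c}) ∧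
     ¬(G.bnd a ≠ none ∧ G.bnd b ≠ none),
   fun x => if x ∈ C then G.label x else ∅,
   fun x => if x ∈ C ∪ {v | v ∈ G.verts ∧ G.bnd v ≠ none ∧ ∃ c ∈ C, G.Adj v c}
            then G.bnd x else none⟩

/-- The set of pieces of `G`. -/
def pcs (G : BLG X) : Set (BLG X) :=
  {p | ∃ v ∈ G.verts, ∃ i, G.bnd v = some i ∧ p = singlePc v i (∅ : Set X)} ∪
  {p | ∃ v ∈ G.verts, ∃ i, G.bnd v = some i ∧ ∃ l ∈ G.label v, p = singlePc v i {l}} ∪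
  {p | ∃ u v i j, G.Adj u v ∧ G.bnd u = some i ∧ G.bnd v = some j ∧ p = edgePc u v i j} ∪
  {p | ∃ C, IsCompOf G (interior G) C ∧ p = compPc G C}

/-- The sum `⊕_{p ∈ P} p` of a set of pieces of a common graph; since pieces of a common
graph overlap exactly in boundary vertices (with equal indices), the sum is the union. -/
def unionOf (P : Set (BLG X)) : BLG X :=
  ⟨⋃ p ∈ P, p.verts,
   fun a b => ∃ p ∈ P, p.Adj a b,
   fun x => ⋃ p ∈ P, p.label x,
   fun x => if h : ∃ p, p ∈ P ∧ p.bnd x ≠ none then (Classical.choose h).bnd x else none⟩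

/-- `mpcs(G)`: all sums of nonempty subsets of the pieces of `G`, up to isomorphism. -/
def mpcs (G : BLG X) : Set (BLG X) :=
  {H | ∃ P ⊆ pcs G, P.Nonempty ∧ Iso H (unionOf P)}

/-- `mpcs` of a set of graphs. -/
def mpcsSet (S : Set (BLG X)) : Set (BLG X) := ⋃ G ∈ S, mpcs G

/-- Assign boundary index `i` to the vertex `v` of `G`. -/
def assignBnd (G : BLG X) (v i : ℕ) : BLG X :=
  ⟨G.verts, G.Adj, G.label, Function.update G.bnd v (some i)⟩

/-- Split the boundary vertex `u` of `G`: add a new vertex `w` with boundary index `i` and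
the edge `{u,w}`, reattach the edges `{u,b}` with `ME b` to `w`, and move the labels `l` of
`u` with `ML l` to `w`. -/
def splitVx (G : BLG X) (u w i : ℕ) (ME : ℕ → Prop) (ML : X → Prop) : BLG X :=
  ⟨insert w G.verts,
   fun a b =>
     (a = w ∧ b = u) ∨ (a = u ∧ b = w) ∨
     (a = w ∧ b ≠ w ∧ G.Adj u b ∧ ME b) ∨ (b = w ∧ a ≠ w ∧ G.Adj u a ∧ ME a) ∨
     (a ≠ w ∧ b ≠ w ∧ G.Adj a b ∧ ¬(a = u ∧ ME b) ∧ ¬(b = u ∧ ME a)),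
   fun x => if x = w then {l | l ∈ G.label u ∧ ML l}
            else if x = u then {l | l ∈ G.label u ∧ ¬ ML l}
            else G.label x,
   fun x => if x = w then some i else G.bnd x⟩

/-- One extension step turning a `t`-boundaried graph into a `(t+1)`-boundaried one (up to
isomorphism): keep the graph unchanged, assign index `t+1` to a non-boundary vertex, or
split a boundary vertex. -/
def ExtOne (t : ℕ) (H H' : BLG X) : Prop :=
  Iso H' H ∨
  (∃ v ∈ H.verts, H.bnd v = none ∧ Iso H' (assignBnd H v (t + 1))) ∨
  (∃ u ∈ H.verts, ∃ i, H.bnd u = some i ∧ ∃ w, w ∉ H.verts ∧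
    ∃ ME : ℕ → Prop, ∃ ML : X → Prop, Iso H' (splitVx H u w (t + 1) ME ML))

/-- `H' ∈ ext_{+k}(H)` for a `t`-boundaried graph `H`: `k` successive extension steps. -/
def ExtN (t : ℕ) : ℕ → BLG X → BLG X → Prop
  | 0, H, H' => Iso H' H
  | k + 1, H, H' => ∃ H'', ExtN t k H H'' ∧ ExtOne (t + k) H'' H'

/-- `ext_{+k}` of a set of `t`-boundaried graphs. -/
def extSet (t k : ℕ) (S : Set (BLG X)) : Set (BLG X) := {H' | ∃ H ∈ S, ExtN t k H H'}

/-- `mpcs_{+t}(S)` for a set `S` of unboundaried graphs. -/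
def mpcsPlus (t : ℕ) (S : Set (BLG X)) : Set (BLG X) := mpcsSet (extSet 0 t S)

/-- `forget(G,k)`: forget the boundary status of all boundary vertices with index `> k`. -/
def forget (G : BLG X) (k : ℕ) : BLG X :=
  ⟨G.verts, G.Adj, G.label, fun v => (G.bnd v).bind fun i => if i ≤ k then some i else none⟩

/-- Membership in a set of graphs, up to isomorphism. -/
def MemIso (H : BLG X) (S : Set (BLG X)) : Prop := ∃ H' ∈ S, Iso H H'

/-- `G1` and `G2` share no edge: no edge between boundary indices `i,j` occurs in both. -/
def EdgeDisjoint (G1 G2 : BLG X) : Prop :=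
  ¬ ∃ i j, (∃ u v, G1.Adj u v ∧ G1.bnd u = some i ∧ G1.bnd v = some j) ∧
           (∃ u v, G2.Adj u v ∧ G2.bnd u = some i ∧ G2.bnd v = some j)

/-- The merge `Π1 ⊙_F Π2`. -/
def Merge (F : Set (BLG X)) (t : ℕ) (P1 P2 : Set (BLG X)) : Set (BLG X) :=
  {G | G ∈ mpcsPlus t F ∧ ∀ G1 G2 : BLG X, G1.WF t → G2.WF t → EdgeDisjoint G1 G2 →
    Iso (glue G1 G2) G →
    (∃ H ∈ P1, Minor H G1) ∨ (∃ H ∈ P2, Minor H G2)}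

/-- `(P1, P2) ∈ split_F(P)`: both contain `P`; for every `G ∈ P` and every subset `Y` of its
pieces, the sum over `Y` was added to `P1` or the sum over the complement was added to `P2`;
and every member of `P1`/`P2` is accounted for by one of the two addition rules. -/
def SplitMem (F : Set (BLG X)) (t : ℕ) (P P1 P2 : Set (BLG X)) : Prop :=
  P ⊆ P1 ∧ P ⊆ P2 ∧
  (∀ G ∈ P, ∀ Y ⊆ pcs G, MemIso (unionOf Y) P1 ∨ MemIso (unionOf (pcs G \ Y)) P2) ∧
  (∀ H ∈ P1, H ∈ P ∨ (∃ G ∈ P, ∃ Y ⊆ pcs G, Iso H (unionOf Y)) ∨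
    (H ∈ mpcsPlus t F ∧ ∃ H', Minor H' H ∧ MemIso H' P1)) ∧
  (∀ H ∈ P2, H ∈ P ∨ (∃ G ∈ P, ∃ Y ⊆ pcs G, Iso H (unionOf Y)) ∨
    (H ∈ mpcsPlus t F ∧ ∃ H', Minor H' H ∧ MemIso H' P2))

/-- `folio*_{Q,t}(G)`: the boundaried labeled minors of `G` lying in `mpcs_{+t}(Q)`. -/
def folioStar (Q : Set (BLG X)) (t : ℕ) (G : BLG X) : Set (BLG X) :=
  {H | H ∈ mpcsPlus t Q ∧ Minor H G}

/-- The `(t+1)`-boundaried graphs in which boundary index `t+1` is assigned to a vertex. -/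
def defBnd (t : ℕ) : Set (BLG X) := {G | ∃ v ∈ G.verts, G.bnd v = some t}

/-!
Induct on `s` from `t'` to `t`. Passing from `forget G s` to `forget G (s + 1)` turns only the
vertex `v₀` of index `s + 1` into a boundary vertex. If `v₀` lies in no branch set, the model
survives unchanged. If it lies in the branch set of a non-boundary vertex `v`, give `v` the
index `s + 1`. If `v` is a boundary vertex of index `i`, realized at `a`, cut its branch set at
`a`: the component of `v₀` becomes the branch set of a new vertex `w` split off from `v`, which
takes over the edges and labels of `v` that the rest of the branch set does not realize.
-/

lemma Iso.refl (G : BLG X) : Iso G G :=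
  ⟨id, Set.bijOn_id _, fun _ _ _ _ => Iff.rfl, fun _ _ => rfl, fun _ _ => rfl⟩

section Reachability

variable {G : BLG X} {S T : Set ℕ} {a b x : ℕ}

def ConnectedIn (G : BLG X) (S : Set ℕ) : Prop := ∀ a ∈ S, ∀ b ∈ S, ReachIn G S a b

lemma ReachIn.symm (hsym : ∀ u v, G.Adj u v → G.Adj v u) (h : ReachIn G S a b) :
    ReachIn G S b a :=
  have : Std.Symm fun u v => G.Adj u v ∧ u ∈ S ∧ v ∈ S :=
    ⟨fun _ _ huv => ⟨hsym _ _ huv.1, huv.2.2, huv.2.1⟩⟩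
  Std.Symm.symm (r := Relation.ReflTransGen _) _ _ h

lemma ReachIn.reachIn_setOf_reachIn (h : ReachIn G T b x) :
    ReachIn G {y | y ∈ T ∧ ReachIn G T b y} b x := by
  induction h with
  | refl => exact .refl
  | tail hby st ih => exact ih.tail ⟨st.1, ⟨st.2.1, hby⟩, ⟨st.2.2, hby.tail st⟩⟩

theorem ConnectedIn.exists_split (hsym : ∀ u v, G.Adj u v → G.Adj v u) (hS : ConnectedIn G S)
    (ha : a ∈ S) (hb : b ∈ S) (hba : b ≠ a) :
    ∃ A B, A ∪ B = S ∧ Disjoint A B ∧ a ∈ A ∧ b ∈ B ∧ ConnectedIn G A ∧ ConnectedIn G B ∧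
      ∃ x ∈ B, ∃ y ∈ A, G.Adj x y := by
  set B := {y | y ∈ S \ {a} ∧ ReachIn G (S \ {a}) b y}
  have hBS : B ⊆ S := fun y hy => hy.1.1
  have haB : a ∉ B := fun h => h.1.2 rfl
  have hclosed : ∀ y ∈ B, ∀ z ∈ S, z ≠ a → G.Adj y z → z ∈ B :=
    fun y hy z hz hza hyz => ⟨⟨hz, hza⟩, hy.2.tail ⟨hyz, hy.1, hz, hza⟩⟩
  have hreach_a : ∀ y, ReachIn G S y a → y ∉ B → ReachIn G (S \ B) y a := by
    intro y hy
    induction hy using Relation.ReflTransGen.head_induction_on with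
    | refl => exact fun _ => .refl
    | @head y c st _ ih =>
      intro hyB
      by_cases hya : y = a
      · exact hya ▸ .refl
      have hcB : c ∉ B := fun hc => hyB (hclosed c hc y st.2.1 hya (hsym _ _ st.1))
      exact .head ⟨st.1, ⟨st.2.1, hyB⟩, ⟨st.2.2, hcB⟩⟩ (ih hcB)
  have hexit : ∀ y, ReachIn G S y a → y ∈ B → ∃ x ∈ B, ∃ z ∈ S \ B, G.Adj x z := by
    intro y hy
    induction hy using Relation.ReflTransGen.head_induction_on with
    | refl => exact fun h => absurd h haB
    | @head y c st _ ih =>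
      intro hyB
      by_cases hc : c ∈ B
      · exact ih hc
      · exact ⟨y, hyB, c, ⟨st.2.2, hc⟩, st.1⟩
  have hbB : b ∈ B := ⟨⟨hb, hba⟩, .refl⟩
  refine ⟨S \ B, B, Set.sdiff_union_of_subset hBS, Set.disjoint_sdiff_left, ⟨ha, haB⟩, hbB,
    fun x hx y hy => ?_, fun x hx y hy => ?_, hexit b (hS b hb a ha) hbB⟩
  · exact (hreach_a x (hS x hx.1 a ha) hx.2).trans
      ((hreach_a y (hS y hy.1 a ha) hy.2).symm hsym)
  · exact (hx.2.reachIn_setOf_reachIn.symm hsym).trans hy.2.reachIn_setOf_reachIn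

end Reachability

section Forget

variable {G : BLG X} {s t a j : ℕ}

lemma forget_of_WF (hG : G.WF t) : forget G t = G := by
  obtain ⟨V, Ad, L, b⟩ := G
  simp only [forget, BLG.mk.injEq, true_and]
  funext v
  cases h : b v with
  | none => rfl
  | some i => simp [(hG.2.2.2.2.2.2 v i h).2.2]

lemma forget_bnd_eq_some (h : (forget G s).bnd a = some j) : G.bnd a = some j := by
  simp only [forget] at h
  cases hga : G.bnd a <;> simp_all

lemma forget_succ_bnd_of_ne (h : G.bnd a ≠ some (s + 1)) :
    (forget G (s + 1)).bnd a = (forget G s).bnd a := by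
  simp only [forget]
  cases hga : G.bnd a with
  | none => rfl
  | some i =>
    have : i ≠ s + 1 := fun e => h (e ▸ hga)
    by_cases hi : i ≤ s
    · simp [hi, Nat.le_succ_of_le hi]
    · simp [hi, show ¬ i ≤ s + 1 by omega]

lemma forget_succ_bnd_of_eq (h : G.bnd a = some (s + 1)) :
    (forget G (s + 1)).bnd a = some (s + 1) ∧ (forget G s).bnd a = none := by
  simp [forget, h]

end Forget

/-- The boundary conditions a minor model imposes on the branch set `S` of a vertex whose
boundary value is `b`, read in a graph with boundary function `bnd`. -/
def RespectsBnd (bnd : ℕ → Option ℕ) (b : Option ℕ) (S : Set ℕ) : Prop :=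
  (b = none → ∀ a ∈ S, bnd a = none) ∧
  ∀ i, b = some i → (∀ a ∈ S, bnd a = none ∨ bnd a = some i) ∧ ∃ a ∈ S, bnd a = some i

section RespectsBnd

variable {bnd bnd' : ℕ → Option ℕ} {b : Option ℕ} {S A : Set ℕ} {i a : ℕ}

lemma RespectsBnd.congr (h : RespectsBnd bnd b S) (hS : ∀ a ∈ S, bnd' a = bnd a) :
    RespectsBnd bnd' b S := by
  refine ⟨fun hb x hx => (hS x hx).trans (h.1 hb x hx), fun j hj => ?_⟩
  obtain ⟨hall, y, hy, hyj⟩ := h.2 j hj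
  exact ⟨fun x hx => hS x hx ▸ hall x hx, y, hy, (hS y hy).trans hyj⟩

lemma RespectsBnd.subset (h : RespectsBnd bnd (some i) S) (hA : A ⊆ S) (ha : a ∈ A)
    (hai : bnd a = some i) : RespectsBnd bnd (some i) A :=
  ⟨nofun, fun _ hj => Option.some.inj hj ▸ ⟨fun x hx => (h.2 i rfl).1 x (hA hx), a, ha, hai⟩⟩

lemma RespectsBnd.none_of_not_mem (h : RespectsBnd bnd (some i) S) (hA : A ⊆ S)
    (huniq : ∀ x, bnd x = some i → x = a) (haA : a ∉ A) : RespectsBnd bnd none A :=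
  ⟨fun _ x hx => ((h.2 i rfl).1 x (hA hx)).resolve_right fun hx' => haA (huniq x hx' ▸ hx),
    nofun⟩

end RespectsBnd

section ForgetSucc

variable {G : BLG X} {s : ℕ} {b : Option ℕ} {S : Set ℕ} {v₀ : ℕ}

lemma RespectsBnd.forget_succ (h : RespectsBnd (forget G s).bnd b S)
    (hS : ∀ a ∈ S, G.bnd a ≠ some (s + 1)) : RespectsBnd (forget G (s + 1)).bnd b S :=
  h.congr fun a ha => forget_succ_bnd_of_ne (hS a ha)

lemma RespectsBnd.forget_succ_of_mem
    (hinj : ∀ u v i, G.bnd u = some i → G.bnd v = some i → u = v)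
    (h : RespectsBnd (forget G s).bnd none S) (hv₀ : v₀ ∈ S) (hv₀b : G.bnd v₀ = some (s + 1)) :
    RespectsBnd (forget G (s + 1)).bnd (some (s + 1)) S := by
  refine ⟨nofun, fun _ hj => Option.some.inj hj ▸ ⟨fun a ha => ?_, v₀, hv₀,
    (forget_succ_bnd_of_eq hv₀b).1⟩⟩
  by_cases hav₀ : a = v₀
  · exact .inr (hav₀ ▸ (forget_succ_bnd_of_eq hv₀b).1)
  · rw [forget_succ_bnd_of_ne fun ha' => hav₀ (hinj _ _ _ ha' hv₀b)]
    exact .inl (h.1 rfl a ha)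

end ForgetSucc

section MinorModel

variable {H K : BLG X} {φ : ℕ → Set ℕ}

lemma MinorModel.respectsBnd (M : MinorModel H K φ) {v : ℕ} (hv : v ∈ H.verts) :
    RespectsBnd K.bnd (H.bnd v) (φ v) :=
  ⟨M.bnd_none v hv, M.bnd_some v hv⟩

lemma MinorModel.rebound (M : MinorModel H K φ) (b c : ℕ → Option ℕ)
    (h : ∀ v ∈ H.verts, RespectsBnd c (b v) (φ v)) :
    MinorModel ⟨H.verts, H.Adj, H.label, b⟩ ⟨K.verts, K.Adj, K.label, c⟩ φ :=
  ⟨M.sub, M.nonempty, M.conn, M.disj, M.edge, fun v hv => (h v hv).1, fun v hv => (h v hv).2,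
    M.labels⟩

lemma MinorModel.eq_of_mem (M : MinorModel H K φ) {u v x : ℕ} (hu : u ∈ H.verts)
    (hv : v ∈ H.verts) (hxu : x ∈ φ u) (hxv : x ∈ φ v) : u = v :=
  by_contra fun huv => Set.disjoint_left.mp (M.disj u hu v hv huv) hxu hxv

end MinorModel

def splitBranch (φ : ℕ → Set ℕ) (v w : ℕ) (A B : Set ℕ) : ℕ → Set ℕ :=
  Function.update (Function.update φ v A) w B

section Split

variable {H K : BLG X} {φ : ℕ → Set ℕ} {v w p : ℕ} {A B : Set ℕ}

@[simp] lemma splitBranch_new : splitBranch φ v w A B w = B := Function.update_self ..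

@[simp] lemma splitBranch_old (hwv : w ≠ v) : splitBranch φ v w A B v = A := by
  simp [splitBranch, Function.update_of_ne hwv.symm]

lemma splitBranch_of_ne (hpw : p ≠ w) (hpv : p ≠ v) : splitBranch φ v w A B p = φ p := by
  simp [splitBranch, Function.update_of_ne hpw, Function.update_of_ne hpv]

lemma MinorModel.split_edge (M : MinorModel H K φ) (hsym : ∀ a b, K.Adj a b → K.Adj b a)
    (hv : v ∈ H.verts) (hw : w ∉ H.verts) (hAB : A ∪ B = φ v)
    (hedge : ∃ x ∈ B, ∃ y ∈ A, K.Adj x y) (j : ℕ) (ML : X → Prop) :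
    ∀ p ∈ insert w H.verts, ∀ q ∈ insert w H.verts,
      (splitVx H v w j (fun q => ¬∃ x ∈ A, ∃ y ∈ splitBranch φ v w A B q, K.Adj x y) ML).Adj p q →
      ∃ x ∈ splitBranch φ v w A B p, ∃ y ∈ splitBranch φ v w A B q, K.Adj x y := by
  have hwv : w ≠ v := fun h => hw (h ▸ hv)
  have hflip : ∀ {P Q : Set ℕ}, (∃ x ∈ P, ∃ y ∈ Q, K.Adj x y) → ∃ y ∈ Q, ∃ x ∈ P, K.Adj y x :=
    fun ⟨x, hx, y, hy, hxy⟩ => ⟨y, hy, x, hx, hsym _ _ hxy⟩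
  have hmoved : ∀ q ∈ insert w H.verts, q ≠ w → H.Adj v q →
      (¬∃ x ∈ A, ∃ y ∈ splitBranch φ v w A B q, K.Adj x y) →
      ∃ x ∈ B, ∃ y ∈ splitBranch φ v w A B q, K.Adj x y := by
    intro q hq hqw hvq hmove
    by_cases hqv : q = v
    · subst hqv
      rwa [splitBranch_old hwv]
    obtain ⟨x, hx, y, hy, hxy⟩ := M.edge v hv q (hq.resolve_left hqw) hvq
    rw [splitBranch_of_ne hqw hqv] at hmove ⊢
    exact ⟨x, (hAB ▸ hx).resolve_left fun hxA => hmove ⟨x, hxA, y, hy, hxy⟩, y, hy, hxy⟩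
  intro p hp q hq hpq
  rcases hpq with ⟨rfl, rfl⟩ | ⟨rfl, rfl⟩ | ⟨rfl, hqw, hvq, hmove⟩ | ⟨rfl, hpw, hvp, hmove⟩ |
    ⟨hpw, hqw, hpq, hp', hq'⟩
  · rwa [splitBranch_new, splitBranch_old hwv]
  · rw [splitBranch_new, splitBranch_old hwv]; exact hflip hedge
  · rw [splitBranch_new]; exact hmoved q hq hqw hvq hmove
  · rw [splitBranch_new]; exact hflip (hmoved p hp hpw hvp hmove)
  · by_cases hpv : p = v
    · subst hpv
      rw [splitBranch_old hwv]; exact not_not.mp fun h => hp' ⟨rfl, h⟩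
    by_cases hqv : q = v
    · subst hqv
      rw [splitBranch_old hwv]; exact hflip (not_not.mp fun h => hq' ⟨rfl, h⟩)
    rw [splitBranch_of_ne hpw hpv, splitBranch_of_ne hqw hqv]
    exact M.edge p (hp.resolve_left hpw) q (hq.resolve_left hqw) hpq

/-- The new vertex `w` takes over the edges of `v` not realized from `A` and the labels of `v`
not found in `A`. -/
theorem MinorModel.split (M : MinorModel H K φ) (hsym : ∀ a b, K.Adj a b → K.Adj b a)
    (hv : v ∈ H.verts) (hw : w ∉ H.verts) (hAB : A ∪ B = φ v) (hdisj : Disjoint A B)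
    (hA : A.Nonempty) (hB : B.Nonempty) (hAc : ConnectedIn K A) (hBc : ConnectedIn K B)
    (hedge : ∃ x ∈ B, ∃ y ∈ A, K.Adj x y) (j : ℕ) (c : ℕ → Option ℕ)
    (hbnd : ∀ p ∈ insert w H.verts,
      RespectsBnd c (if p = w then some j else H.bnd p) (splitBranch φ v w A B p)) :
    MinorModel
      (splitVx H v w j (fun q => ¬∃ x ∈ A, ∃ y ∈ splitBranch φ v w A B q, K.Adj x y)
        (fun l => ¬∃ a ∈ A, l ∈ K.label a))
      ⟨K.verts, K.Adj, K.label, c⟩ (splitBranch φ v w A B) := by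
  have hwv : w ≠ v := (ne_of_mem_of_not_mem hv hw).symm
  have hAv : A ⊆ φ v := hAB ▸ Set.subset_union_left
  have hBv : B ⊆ φ v := hAB ▸ Set.subset_union_right
  set σ : ℕ → ℕ := fun p => if p = w then v else p
  have hσ : ∀ p ∈ insert w H.verts, σ p ∈ H.verts ∧ splitBranch φ v w A B p ⊆ φ (σ p) := by
    rintro p (rfl | hp)
    · simpa [σ] using ⟨hv, hBv⟩
    have hpw : p ≠ w := ne_of_mem_of_not_mem hp hw
    by_cases hpv : p = v
    · subst hpv; simpa [σ, hwv] using ⟨hp, hAv⟩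
    · simpa [σ, hpw, splitBranch_of_ne hpw hpv] using hp
  refine ⟨fun p hp => (hσ p hp).2.trans (M.sub _ (hσ p hp).1), ?_, ?_, ?_,
    M.split_edge hsym hv hw hAB hedge j _, fun p hp => (hbnd p hp).1,
    fun p hp => (hbnd p hp).2, ?_⟩
  · rintro p (rfl | hp)
    · rw [splitBranch_new]; exact hB
    by_cases hpv : p = v
    · subst hpv; rw [splitBranch_old hwv]; exact hA
    · rw [splitBranch_of_ne (ne_of_mem_of_not_mem hp hw) hpv]; exact M.nonempty p hp
  · rintro p (rfl | hp)
    · rw [splitBranch_new]; exact hBc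
    by_cases hpv : p = v
    · subst hpv; rw [splitBranch_old hwv]; exact hAc
    · rw [splitBranch_of_ne (ne_of_mem_of_not_mem hp hw) hpv]; exact M.conn p hp
  · intro p hp q hq hpq
    by_cases hσpq : σ p = σ q
    · rcases eq_or_ne p w with rfl | hpw
      · obtain rfl : q = v := by simpa [σ, Ne.symm hpq] using hσpq.symm
        rw [splitBranch_new, splitBranch_old hwv]; exact hdisj.symm
      rcases eq_or_ne q w with rfl | hqw
      · obtain rfl : p = v := by simpa [σ, hpw] using hσpq
        rw [splitBranch_new, splitBranch_old hwv]; exact hdisj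
      · exact absurd (by simpa [σ, hpw, hqw] using hσpq) hpq
    · exact (M.disj _ (hσ p hp).1 _ (hσ q hq).1 hσpq).mono (hσ p hp).2 (hσ q hq).2
  · rintro p (rfl | hp) l hl
    · obtain ⟨hlv, hlA⟩ : l ∈ H.label v ∧ ¬∃ a ∈ A, l ∈ K.label a := by simpa [splitVx] using hl
      obtain ⟨a, ha, hla⟩ := M.labels v hv l hlv
      rw [splitBranch_new]
      exact ⟨a, (hAB ▸ ha).resolve_left fun haA => hlA ⟨a, haA, hla⟩, hla⟩
    have hpw : p ≠ w := ne_of_mem_of_not_mem hp hw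
    by_cases hpv : p = v
    · subst hpv
      obtain ⟨-, hlA⟩ : l ∈ H.label p ∧ ¬¬∃ a ∈ A, l ∈ K.label a := by simpa [splitVx, hpw] using hl
      rw [splitBranch_old hwv]; exact not_not.mp hlA
    · rw [splitBranch_of_ne hpw hpv]
      have hl' : l ∈ H.label p := by simpa [splitVx, hpw, hpv] using hl
      exact M.labels p hp l hl'

end Split

section Step

variable {H G : BLG X} {φ : ℕ → Set ℕ} {s v v₀ : ℕ}

lemma MinorModel.forget_succ (M : MinorModel H (forget G s) φ)
    (h : ∀ v ∈ H.verts, ∀ a ∈ φ v, G.bnd a ≠ some (s + 1)) :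
    MinorModel H (forget G (s + 1)) φ :=
  M.rebound H.bnd _ fun v hv => (M.respectsBnd hv).forget_succ (h v hv)

lemma MinorModel.bnd_ne_of_ne (M : MinorModel H (forget G s) φ)
    (hinj : ∀ u v i, G.bnd u = some i → G.bnd v = some i → u = v) (hv : v ∈ H.verts)
    (hv₀ : v₀ ∈ φ v) (hv₀b : G.bnd v₀ = some (s + 1)) {p : ℕ} (hp : p ∈ H.verts) (hpv : p ≠ v) :
    ∀ a ∈ φ p, G.bnd a ≠ some (s + 1) :=
  fun _ ha hab => hpv (M.eq_of_mem hp hv ha (hinj _ _ _ hab hv₀b ▸ hv₀))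

lemma MinorModel.assignBnd_forget_succ (M : MinorModel H (forget G s) φ)
    (hinj : ∀ u v i, G.bnd u = some i → G.bnd v = some i → u = v) (hv : v ∈ H.verts)
    (hb : H.bnd v = none) (hv₀ : v₀ ∈ φ v) (hv₀b : G.bnd v₀ = some (s + 1)) :
    MinorModel (assignBnd H v (s + 1)) (forget G (s + 1)) φ := by
  refine M.rebound _ _ fun p hp => ?_
  by_cases hpv : p = v
  · subst hpv
    rw [Function.update_self]
    exact (hb ▸ M.respectsBnd hp).forget_succ_of_mem hinj hv₀ hv₀b
  · rw [Function.update_of_ne hpv]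
    exact (M.respectsBnd hp).forget_succ (M.bnd_ne_of_ne hinj hv hv₀ hv₀b hp hpv)

lemma MinorModel.exists_splitVx_forget_succ (M : MinorModel H (forget G s) φ)
    (hsym : ∀ u v, G.Adj u v → G.Adj v u)
    (hinj : ∀ u v i, G.bnd u = some i → G.bnd v = some i → u = v) (hfin : H.verts.Finite)
    {i : ℕ} (hv : v ∈ H.verts) (hb : H.bnd v = some i) (hv₀ : v₀ ∈ φ v)
    (hv₀b : G.bnd v₀ = some (s + 1)) :
    ∃ w ∉ H.verts, ∃ ME ML, Minor (splitVx H v w (s + 1) ME ML) (forget G (s + 1)) := by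
  obtain ⟨-, a, ha, hai⟩ := M.bnd_some v hv i hb
  have hv₀a : v₀ ≠ a := by
    rintro rfl
    simp [(forget_succ_bnd_of_eq hv₀b).2] at hai
  obtain ⟨A, B, hAB, hdisj, haA, hv₀B, hAc, hBc, hedge⟩ :=
    ConnectedIn.exists_split hsym (M.conn v hv) ha hv₀ hv₀a
  have hAv : A ⊆ φ v := hAB ▸ Set.subset_union_left
  have hBv : B ⊆ φ v := hAB ▸ Set.subset_union_right
  obtain ⟨w, hw : w ∉ H.verts⟩ := hfin.infinite_compl.nonempty
  have hwv : w ≠ v := (ne_of_mem_of_not_mem hv hw).symm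
  refine ⟨w, hw, _, _, _, M.split hsym hv hw hAB hdisj ⟨a, haA⟩ ⟨v₀, hv₀B⟩ hAc hBc hedge
    (s + 1) (forget G (s + 1)).bnd ?_⟩
  rintro p (rfl | hp)
  · have hauniq : ∀ x, (forget G s).bnd x = some i → x = a := fun x hx =>
      hinj _ _ _ (forget_bnd_eq_some hx) (forget_bnd_eq_some hai)
    have hB : RespectsBnd (forget G s).bnd none B :=
      (hb ▸ M.respectsBnd hv).none_of_not_mem hBv hauniq (Set.disjoint_left.mp hdisj haA)
    simpa using hB.forget_succ_of_mem hinj hv₀B hv₀b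
  have hpw : p ≠ w := ne_of_mem_of_not_mem hp hw
  rw [if_neg hpw]
  by_cases hpv : p = v
  · subst hpv
    rw [splitBranch_old hwv, hb]
    refine ((hb ▸ M.respectsBnd hp).subset hAv haA hai).forget_succ fun x hx hx' => ?_
    exact Set.disjoint_left.mp hdisj hx (hinj _ _ _ hx' hv₀b ▸ hv₀B)
  · rw [splitBranch_of_ne hpw hpv]
    exact (M.respectsBnd hp).forget_succ (M.bnd_ne_of_ne hinj hv hv₀ hv₀b hp hpv)

end Step

section Extension

variable {H G : BLG X}

theorem exists_extOne_minor_forget_succ (hsym : ∀ u v, G.Adj u v → G.Adj v u)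
    (hinj : ∀ u v i, G.bnd u = some i → G.bnd v = some i → u = v) (s : ℕ)
    (hfin : H.verts.Finite) (hmin : Minor H (forget G s)) :
    ∃ H', ExtOne s H H' ∧ Minor H' (forget G (s + 1)) ∧ H'.verts.Finite := by
  obtain ⟨φ, M⟩ := hmin
  by_cases hv₀ : ∃ v ∈ H.verts, ∃ v₀ ∈ φ v, G.bnd v₀ = some (s + 1)
  swap
  · push Not at hv₀
    exact ⟨H, .inl (Iso.refl H), ⟨φ, M.forget_succ hv₀⟩, hfin⟩
  obtain ⟨v, hv, v₀, hv₀, hv₀b⟩ := hv₀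
  cases hb : H.bnd v with
  | none =>
    exact ⟨_, .inr (.inl ⟨v, hv, hb, Iso.refl _⟩),
      ⟨φ, M.assignBnd_forget_succ hinj hv hb hv₀ hv₀b⟩, hfin⟩
  | some i =>
    obtain ⟨w, hw, ME, ML, hmin'⟩ := M.exists_splitVx_forget_succ hsym hinj hfin hv hb hv₀ hv₀b
    exact ⟨_, .inr (.inr ⟨v, hv, i, hb, w, hw, ME, ML, Iso.refl _⟩), hmin', hfin.insert w⟩

theorem exists_extN_minor_forget (hsym : ∀ u v, G.Adj u v → G.Adj v u)
    (hinj : ∀ u v i, G.bnd u = some i → G.bnd v = some i → u = v) {s : ℕ}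
    (hfin : H.verts.Finite) (hmin : Minor H (forget G s)) (k : ℕ) :
    ∃ H', ExtN s k H H' ∧ Minor H' (forget G (s + k)) ∧ H'.verts.Finite := by
  induction k with
  | zero => exact ⟨H, Iso.refl H, hmin, hfin⟩
  | succ k ih =>
    obtain ⟨H'', hext, hmin'', hfin''⟩ := ih
    obtain ⟨H', hext', hmin', hfin'⟩ :=
      exists_extOne_minor_forget_succ hsym hinj (s + k) hfin'' hmin''
    exact ⟨H', ⟨H'', hext, hext'⟩, hmin', hfin'⟩

end Extension

/-- If `t ≥ t'`, `H` is a `t'`-boundaried `X`-labeled graph, `G` is a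
`t`-boundaried `X`-labeled graph, and `H` is a boundaried labeled minor of `forget(G,t')`,
then some `H' ∈ ext_{+(t−t')}(H)` is a boundaried labeled minor of `G`. -/
theorem stmt8 {X : Type} (t t' : ℕ) (htt' : t' ≤ t) (H G : BLG X)
    (hH : H.WF t') (hG : G.WF t) (hmin : Minor H (forget G t')) :
    ∃ H', ExtN t' (t - t') H H' ∧ Minor H' G := by
  obtain ⟨H', hext, hmin', -⟩ :=
    exists_extN_minor_forget hG.2.1 hG.2.2.2.2.2.1 hH.1 hmin (t - t')
  rw [Nat.add_sub_cancel' htt', forget_of_WF hG] at hmin'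
  exact ⟨H', hext, hmin'⟩

end

end FDel
end

section
/- Let G be an unboundaried X-labeled graph and let H be a t-boundaried X-labeled graph. Then H ∈ mpcs_{+(t+1)}(G) if and only if H ∈ mpcs_{+t}(G). -/
namespace FDel

open scoped Classical

noncomputable section

variable {X : Type}

/-! Only `mpcs_{+(t+1)}(G) ⊆ mpcs_{+t}(G)` has content. Write the extension `G'` of `G` as an
extension `G₀` by `t` indices followed by one more step, and `H ≅ ⊕ P` with `P ⊆ pcs(G')`.
As `H` is `t`-boundaried, no piece in `P` carries the index `t + 1`. Undoing the last step
(clearing the index `t + 1` again, or contracting the new vertex back into the vertex it was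
split from) gives a copy of `G₀` in which each such piece is still a piece: vertex, label and
edge pieces avoid the new vertex, and a component of `G' − δ(G')` whose piece avoids it is not
adjacent to it, so it stays a component with the same piece. -/

lemma BLG.ext {G G' : BLG X} (hV : G.verts = G'.verts) (hA : ∀ a b, G.Adj a b ↔ G'.Adj a b)
    (hL : ∀ x, G.label x = G'.label x) (hB : ∀ x, G.bnd x = G'.bnd x) : G = G' := by
  obtain ⟨V, A, L, B⟩ := G
  obtain ⟨V', A', L', B'⟩ := G'
  simp only [BLG.mk.injEq]
  exact ⟨hV, funext fun a => funext fun b => propext (hA a b), funext hL, funext hB⟩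

lemma Iso.trans {G₁ G₂ G₃ : BLG X} (h₁₂ : Iso G₁ G₂) (h₂₃ : Iso G₂ G₃) : Iso G₁ G₃ := by
  obtain ⟨f, hf, hfa, hfl, hfb⟩ := h₁₂
  obtain ⟨g, hg, hga, hgl, hgb⟩ := h₂₃
  refine ⟨g ∘ f, hg.comp hf, fun u hu v hv => ?_, fun v hv => ?_, fun v hv => ?_⟩
  · exact (hfa u hu v hv).trans (hga _ (hf.mapsTo hu) _ (hf.mapsTo hv))
  · exact (hgl _ (hf.mapsTo hv)).trans (hfl v hv)
  · exact (hgb _ (hf.mapsTo hv)).trans (hfb v hv)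

/-- The part of `BLG.WF` that is invariant under `Iso`, which only sees the vertex set. -/
structure IsSimple (G : BLG X) : Prop where
  symm : ∀ u ∈ G.verts, ∀ v ∈ G.verts, G.Adj u v → G.Adj v u
  loopless : ∀ v ∈ G.verts, ¬ G.Adj v v

lemma BLG.WF.isSimple {t : ℕ} {G : BLG X} (h : G.WF t) : IsSimple G :=
  ⟨fun u _ v _ => h.2.1 u v, fun v _ => h.2.2.1 v⟩

lemma IsSimple.of_iso {G G' : BLG X} (h : Iso G G') (hG' : IsSimple G') : IsSimple G := by
  obtain ⟨f, hf, hfa, -, -⟩ := h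
  refine ⟨fun u hu v hv huv => ?_, fun v hv hvv => ?_⟩
  · exact (hfa v hv u hu).2 (hG'.symm _ (hf.mapsTo hu) _ (hf.mapsTo hv) ((hfa u hu v hv).1 huv))
  · exact hG'.loopless _ (hf.mapsTo hv) ((hfa v hv v hv).1 hvv)

lemma IsSimple.splitVx {G : BLG X} {u w i : ℕ} {ME : ℕ → Prop} {ML : X → Prop}
    (hG : IsSimple G) (hu : u ∈ G.verts) (hw : w ∉ G.verts) :
    IsSimple (splitVx G u w i ME ML) := by
  have hwu : w ≠ u := fun h => hw (h ▸ hu)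
  refine ⟨fun a ha b hb hab => ?_, fun v hv hvv => ?_⟩
  · rcases hab with ⟨h₁, h₂⟩ | ⟨h₁, h₂⟩ | h | h | ⟨h₁, h₂, h₃, h₄, h₅⟩
    · exact Or.inr (Or.inl ⟨h₂, h₁⟩)
    · exact Or.inl ⟨h₂, h₁⟩
    · exact Or.inr (Or.inr (Or.inr (Or.inl h)))
    · exact Or.inr (Or.inr (Or.inl h))
    · have ha' := (Set.mem_insert_iff.1 ha).resolve_left h₁
      have hb' := (Set.mem_insert_iff.1 hb).resolve_left h₂
      exact Or.inr (Or.inr (Or.inr (Or.inr ⟨h₂, h₁, hG.symm a ha' b hb' h₃, h₅, h₄⟩)))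
  · rcases hvv with ⟨h₁, h₂⟩ | ⟨h₁, h₂⟩ | ⟨h₁, h₂, -⟩ | ⟨h₁, h₂, -⟩ | ⟨h₁, -, h₃, -⟩
    · exact hwu (h₁ ▸ h₂)
    · exact hwu (h₂ ▸ h₁)
    · exact h₂ h₁
    · exact h₂ h₁
    · exact hG.loopless v ((Set.mem_insert_iff.1 hv).resolve_left h₁) h₃

lemma IsSimple.of_extOne {s : ℕ} {G G' : BLG X} (hG : IsSimple G) (h : ExtOne s G G') :
    IsSimple G' := by
  rcases h with h | ⟨v, -, -, h⟩ | ⟨u, hu, -, -, w, hw, ME, ML, h⟩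
  · exact hG.of_iso h
  · exact IsSimple.of_iso (G' := assignBnd G v (s + 1)) h ⟨hG.symm, hG.loopless⟩
  · exact (hG.splitVx hu hw).of_iso h

lemma IsSimple.of_extN {t : ℕ} {G : BLG X} (hG : IsSimple G) :
    ∀ {k} {G' : BLG X}, ExtN t k G G' → IsSimple G'
  | 0, _, h => hG.of_iso h
  | _ + 1, _, ⟨_, h, hstep⟩ => (hG.of_extN h).of_extOne hstep

lemma ExtOne.of_iso {s : ℕ} {G G' G'' : BLG X} (h : ExtOne s G G') (hi : Iso G'' G') :
    ExtOne s G G'' := by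
  rcases h with h | ⟨v, hv, hb, h⟩ | ⟨u, hu, i, hb, w, hw, ME, ML, h⟩
  · exact Or.inl (hi.trans h)
  · exact Or.inr (Or.inl ⟨v, hv, hb, hi.trans h⟩)
  · exact Or.inr (Or.inr ⟨u, hu, i, hb, w, hw, ME, ML, hi.trans h⟩)

lemma ExtN.of_iso {t k : ℕ} {G G' G'' : BLG X} (h : ExtN t k G G') (hi : Iso G'' G') :
    ExtN t k G G'' := by
  cases k with
  | zero => exact hi.trans h
  | succ k =>
    obtain ⟨Gp, h₁, h₂⟩ := h
    exact ⟨Gp, h₁, h₂.of_iso hi⟩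

lemma bnd_of_mem_pcs {G p : BLG X} (hp : p ∈ pcs G) {x : ℕ} (hx : p.bnd x ≠ none) :
    x ∈ p.verts ∧ p.bnd x = G.bnd x := by
  simp only [pcs, Set.mem_union, Set.mem_ofPred_eq] at hp
  rcases hp with ((⟨v, -, i, hb, rfl⟩ | ⟨v, -, i, hb, l, -, rfl⟩) |
      ⟨u, v, i, j, -, hbu, hbv, rfl⟩) | ⟨C, -, rfl⟩
  · by_cases h : x = v
    · subst h; simp [singlePc, hb]
    · simp [singlePc, h] at hx
  · by_cases h : x = v
    · subst h; simp [singlePc, hb]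
    · simp [singlePc, h] at hx
  · by_cases h : x = u
    · subst h; simp [edgePc, hbu]
    · by_cases h' : x = v <;> simp_all [edgePc]
  · by_cases h : x ∈ (compPc G C).verts
    · exact ⟨h, if_pos h⟩
    · exact absurd (if_neg h) hx

lemma unionOf_bnd_of_mem {G : BLG X} {P : Set (BLG X)} (hP : P ⊆ pcs G)
    {p : BLG X} (hp : p ∈ P) {x : ℕ} (hx : p.bnd x ≠ none) :
    (unionOf P).bnd x = p.bnd x := by
  have h : ∃ q, q ∈ P ∧ q.bnd x ≠ none := ⟨p, hp, hx⟩
  have hq := Classical.choose_spec h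
  show (if h : ∃ q, q ∈ P ∧ q.bnd x ≠ none then (Classical.choose h).bnd x else none) = _
  rw [dif_pos h, (bnd_of_mem_pcs (hP hq.1) hq.2).2, (bnd_of_mem_pcs (hP hp) hx).2]

lemma bnd_ne_of_iso_unionOf {t : ℕ} {G H : BLG X} {P : Set (BLG X)} (hH : H.WF t)
    (hP : P ⊆ pcs G) (hIso : Iso H (unionOf P)) {p : BLG X} (hp : p ∈ P) (x : ℕ) :
    p.bnd x ≠ some (t + 1) := by
  intro hx
  have hne : p.bnd x ≠ none := by simp [hx]
  obtain ⟨f, hf, -, -, hfb⟩ := hIso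
  obtain ⟨v, hv, rfl⟩ := hf.surjOn (Set.mem_biUnion hp (bnd_of_mem_pcs (hP hp) hne).1)
  have hv' : H.bnd v = some (t + 1) := by rw [← hfb v hv, unionOf_bnd_of_mem hP hp hne, hx]
  have := (hH.2.2.2.2.2.2 v (t + 1) hv').2.2
  omega

lemma IsCompOf.of_subset {G G' : BLG X} {S S' C : Set ℕ} (hC : IsCompOf G S C) (hSS' : S ⊆ S')
    (hadj : ∀ a ∈ S, ∀ b ∈ S, G.Adj a b ↔ G'.Adj a b)
    (hexit : ∀ a ∈ C, ∀ b ∈ S', G'.Adj a b → b ∈ S) : IsCompOf G' S' C := by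
  obtain ⟨v, hv, rfl⟩ := hC
  refine ⟨v, hSS' hv, Set.ext fun w => ⟨fun ⟨hw, hr⟩ => ⟨hSS' hw, ?_⟩, fun hw => ?_⟩⟩
  · exact Relation.ReflTransGen.mono
      (fun a b ⟨h, ha, hb⟩ => ⟨(hadj a ha b hb).1 h, hSS' ha, hSS' hb⟩) _ _ hr
  · obtain ⟨-, hr⟩ := hw
    induction hr with
    | refl => exact ⟨hv, .refl⟩
    | tail _ hbc ih =>
      obtain ⟨hbS, hrb⟩ := ih
      obtain ⟨hbc, -, hcS'⟩ := hbc
      have hcS := hexit _ ⟨hbS, hrb⟩ _ hcS' hbc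
      exact ⟨hcS, hrb.tail ⟨(hadj _ hbS _ hcS).2 hbc, hbS, hcS⟩⟩

lemma mem_compPc_verts {G : BLG X} {C : Set ℕ} {x : ℕ} :
    x ∈ (compPc G C).verts ↔ x ∈ C ∨ (x ∈ G.verts ∧ G.bnd x ≠ none ∧ ∃ c ∈ C, G.Adj x c) :=
  Iff.rfl

lemma compPc_congr {G G' : BLG X} {C : Set ℕ}
    (hadj : ∀ c ∈ C, ∀ x, (G.Adj c x ↔ G'.Adj c x) ∧ (G.Adj x c ↔ G'.Adj x c))
    (hlabel : ∀ c ∈ C, G.label c = G'.label c) (hbnd : ∀ c ∈ C, G.bnd c = G'.bnd c)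
    (hnbr : ∀ x, ∀ c ∈ C, G.Adj x c → (x ∈ G.verts ↔ x ∈ G'.verts) ∧ G.bnd x = G'.bnd x) :
    compPc G C = compPc G' C := by
  have hV : ∀ x, x ∈ (compPc G C).verts ↔ x ∈ (compPc G' C).verts := by
    intro x
    simp only [mem_compPc_verts]
    constructor
    · rintro (hx | ⟨hx, hb, c, hc, hxc⟩)
      · exact Or.inl hx
      · obtain ⟨hxV, hxB⟩ := hnbr x c hc hxc
        exact Or.inr ⟨hxV.1 hx, hxB ▸ hb, c, hc, ((hadj c hc x).2).1 hxc⟩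
    · rintro (hx | ⟨hx, hb, c, hc, hxc⟩)
      · exact Or.inl hx
      · have hxc' := ((hadj c hc x).2).2 hxc
        obtain ⟨hxV, hxB⟩ := hnbr x c hc hxc'
        exact Or.inr ⟨hxV.2 hx, hxB ▸ hb, c, hc, hxc'⟩
  have hB : ∀ x ∈ (compPc G C).verts, G.bnd x = G'.bnd x := by
    rintro x (hx | ⟨-, -, c, hc, hxc⟩)
    · exact hbnd x hx
    · exact (hnbr x c hc hxc).2
  have hA : ∀ a ∈ (compPc G C).verts, ∀ b ∈ (compPc G C).verts,
      ¬(G.bnd a ≠ none ∧ G.bnd b ≠ none) → (G.Adj a b ↔ G'.Adj a b) := by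
    rintro a (ha | ⟨-, ha, -⟩) b (hb | ⟨-, hb, -⟩) hab
    · exact (hadj a ha b).1
    · exact (hadj a ha b).1
    · exact (hadj b hb a).2
    · exact absurd ⟨ha, hb⟩ hab
  refine BLG.ext (Set.ext hV) (fun a b => ?_) (fun x => ?_) (fun x => ?_)
  · show (G.Adj a b ∧ _) ↔ (G'.Adj a b ∧ _)
    refine ⟨fun ⟨h, ha, hb, hab⟩ => ?_, fun ⟨h, ha, hb, hab⟩ => ?_⟩
    · have hab' := hab
      rw [hB a ha, hB b hb] at hab'
      exact ⟨(hA a ha b hb hab).1 h, (hV a).1 ha, (hV b).1 hb, hab'⟩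
    · have ha' := (hV a).2 ha
      have hb' := (hV b).2 hb
      have hab' : ¬(G.bnd a ≠ none ∧ G.bnd b ≠ none) := by rwa [hB a ha', hB b hb']
      exact ⟨(hA a ha' b hb' hab').2 h, ha', hb', hab'⟩
  · show (if x ∈ C then _ else _) = (if x ∈ C then _ else _)
    split_ifs with hx
    · exact hlabel x hx
    · rfl
  · show (if x ∈ C ∪ _ then G.bnd x else none) = (if x ∈ C ∪ _ then G'.bnd x else none)
    split_ifs with h₁ h₂ h₂
    · exact hB x h₁
    · exact absurd ((hV x).1 h₁) h₂
    · exact absurd ((hV x).2 h₂) h₁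
    · rfl

lemma mem_pcs_of_agree {G G' : BLG X} {z j : ℕ} (hz : G.bnd z = some j)
    (hverts : ∀ x ∈ G.verts, x ≠ z → x ∈ G'.verts) (hbnd : ∀ x, x ≠ z → G'.bnd x = G.bnd x)
    (hlabel : ∀ x, x ≠ z → G.label x ⊆ G'.label x)
    (hadj : ∀ a b, G.Adj a b → a ≠ z → b ≠ z → G'.Adj a b)
    (hcomp : ∀ C, IsCompOf G (interior G) C → z ∉ (compPc G C).verts →
      IsCompOf G' (interior G') C ∧ compPc G C = compPc G' C)
    {p : BLG X} (hp : p ∈ pcs G) (hav : ∀ x, p.bnd x ≠ some j) : p ∈ pcs G' := by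
  have hz' : ∀ x, p.bnd x ≠ none → x ≠ z := fun x hx hxz =>
    hav x (by rw [(bnd_of_mem_pcs hp hx).2, hxz, hz])
  simp only [pcs, Set.mem_union, Set.mem_ofPred_eq] at hp ⊢
  rcases hp with ((⟨x, hx, i, hbx, rfl⟩ | ⟨x, hx, i, hbx, l, hl, rfl⟩) |
      ⟨a, b, i, i', hab, hba, hbb, rfl⟩) | ⟨C, hC, rfl⟩
  · have hxz : x ≠ z := hz' x (by simp [singlePc])
    exact Or.inl (Or.inl (Or.inl ⟨x, hverts x hx hxz, i, (hbnd x hxz).trans hbx, rfl⟩))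
  · have hxz : x ≠ z := hz' x (by simp [singlePc])
    exact Or.inl (Or.inl (Or.inr
      ⟨x, hverts x hx hxz, i, (hbnd x hxz).trans hbx, l, hlabel x hxz hl, rfl⟩))
  · have haz : a ≠ z := hz' a (by simp [edgePc])
    have hbz : b ≠ z := hz' b (by by_cases hba : b = a <;> simp [edgePc, hba])
    exact Or.inl (Or.inr ⟨a, b, i, i', hadj a b hab haz hbz, (hbnd a haz).trans hba,
      (hbnd b hbz).trans hbb, rfl⟩)
  · refine Or.inr ⟨C, hcomp C hC fun hzV => hav z ?_⟩
    rw [show (compPc G C).bnd z = G.bnd z from if_pos hzV, hz]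

def clearBnd (G : BLG X) (v : ℕ) : BLG X :=
  ⟨G.verts, G.Adj, G.label, Function.update G.bnd v none⟩

lemma clearBnd_assignBnd {G : BLG X} {v i : ℕ} (hv : G.bnd v = none) :
    clearBnd (assignBnd G v i) v = G := by
  obtain ⟨V, A, L, B⟩ := G
  simp [clearBnd, assignBnd, ← hv]

lemma Iso.exists_clearBnd {G G' : BLG X} (h : Iso G G') {v : ℕ} (hv : v ∈ G'.verts) :
    ∃ v' ∈ G.verts, G.bnd v' = G'.bnd v ∧ Iso (clearBnd G v') (clearBnd G' v) := by
  obtain ⟨f, hf, hfa, hfl, hfb⟩ := h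
  obtain ⟨v', hv', rfl⟩ := hf.surjOn hv
  refine ⟨v', hv', (hfb v' hv').symm, f, hf, hfa, hfl, fun x hx => ?_⟩
  by_cases hxv : x = v'
  · subst hxv
    simp [clearBnd]
  · simp [clearBnd, Function.update_of_ne hxv, (hf.injOn.eq_iff hx hv').not.2 hxv, hfb x hx]

lemma mem_pcs_clearBnd {G p : BLG X} {v j : ℕ} (hG : IsSimple G) (hv : v ∈ G.verts)
    (hb : G.bnd v = some j) (hp : p ∈ pcs G) (hav : ∀ x, p.bnd x ≠ some j) :
    p ∈ pcs (clearBnd G v) := by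
  refine mem_pcs_of_agree (G' := clearBnd G v) hb (fun x hx _ => hx)
    (fun x hx => Function.update_of_ne hx _ _)
    (fun _ _ => le_rfl) (fun _ _ h _ _ => h) (fun C hC hvC => ?_) hp hav
  have hnbr : ∀ c ∈ C, ¬ G.Adj v c := fun c hc hvc =>
    hvC (Or.inr ⟨hv, by simp [hb], c, hc, hvc⟩)
  have hCv : ∀ c ∈ C, c ≠ v := fun c hc hcv => hvC (Or.inl (hcv ▸ hc))
  have hC' : IsCompOf (clearBnd G v) (interior (clearBnd G v)) C := by
    refine hC.of_subset (fun x ⟨hx, hbx⟩ => ⟨hx, ?_⟩) (fun _ _ _ _ => Iff.rfl) ?_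
    · by_cases hxv : x = v
      · simp [clearBnd, hxv]
      · simp [clearBnd, Function.update_of_ne hxv, hbx]
    · rintro a ha b ⟨hb', hbb⟩ hab
      have hbv : b ≠ v := by
        rintro rfl
        obtain ⟨_, _, rfl⟩ := hC
        exact hnbr a ha (hG.symm a ha.1.1 b hv hab)
      exact ⟨hb', by simpa [clearBnd, Function.update_of_ne hbv] using hbb⟩
  refine ⟨hC', compPc_congr (fun _ _ _ => ⟨Iff.rfl, Iff.rfl⟩) (fun _ _ => rfl)
    (fun c hc => (Function.update_of_ne (hCv c hc) _ _).symm) fun x c hc hxc => ⟨Iff.rfl, ?_⟩⟩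
  have hxv : x ≠ v := by
    rintro rfl
    exact hnbr c hc hxc
  exact (Function.update_of_ne hxv _ _).symm

/-- Contract the edge `uw`, merging `w` into `u`; this undoes `splitVx`. -/
def contract (G : BLG X) (u w : ℕ) : BLG X :=
  ⟨G.verts \ {w},
   fun a b => a ≠ w ∧ b ≠ w ∧ (G.Adj a b ∨ (a = u ∧ b ≠ u ∧ G.Adj w b) ∨
     (b = u ∧ a ≠ u ∧ G.Adj a w)),
   fun x => if x = u then G.label u ∪ G.label w else G.label x,
   fun x => if x = w then none else G.bnd x⟩

section splitVx

variable {G : BLG X} {u w i : ℕ} {ME : ℕ → Prop} {ML : X → Prop}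

lemma splitVx_adj_of_ne {a b : ℕ} (ha : a ≠ w) (hb : b ≠ w) :
    (splitVx G u w i ME ML).Adj a b ↔ G.Adj a b ∧ ¬(a = u ∧ ME b) ∧ ¬(b = u ∧ ME a) := by
  simp [splitVx, ha, hb]

lemma splitVx_adj_new_left {b : ℕ} (hb : b ≠ w) :
    (splitVx G u w i ME ML).Adj w b ↔ b = u ∨ G.Adj u b ∧ ME b := by
  simp [splitVx, hb]

lemma splitVx_adj_new_right {a : ℕ} (ha : a ≠ w) :
    (splitVx G u w i ME ML).Adj a w ↔ a = u ∨ G.Adj u a ∧ ME a := by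
  simp [splitVx, ha]

lemma iso_contract_splitVx (hG : IsSimple G) (hu : u ∈ G.verts) (hw : w ∉ G.verts) :
    Iso (contract (splitVx G u w i ME ML) u w) G := by
  have hV : (contract (splitVx G u w i ME ML) u w).verts = G.verts :=
    Set.insert_sdiff_self_of_notMem hw
  have hne : ∀ x ∈ G.verts, x ≠ w := fun x hx hxw => hw (hxw ▸ hx)
  refine ⟨id, hV ▸ Set.bijOn_id _, fun a ha b hb => ?_, fun x hx => ?_, fun x hx => ?_⟩
  · rw [hV] at ha hb
    show (a ≠ w ∧ b ≠ w ∧ _) ↔ _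
    rw [splitVx_adj_of_ne (hne a ha) (hne b hb), splitVx_adj_new_left (hne b hb),
      splitVx_adj_new_right (hne a ha)]
    have := hG.symm a ha u hu
    have := hG.symm u hu a ha
    have := hG.loopless u hu
    by_cases hau : a = u <;> by_cases hbu : b = u
    · subst hau hbu
      simp_all
    · subst hau
      simp_all
      tauto
    · subst hbu
      simp_all
      tauto
    · simp_all
  · rw [hV] at hx
    by_cases hxu : x = u
    · subst hxu
      ext l
      simp [contract, splitVx, hne x hx]
      tauto
    · simp [contract, splitVx, hne x hx, hxu]
  · rw [hV] at hx
    simp [contract, splitVx, hne x hx]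

end splitVx

lemma Iso.exists_contract {G G' : BLG X} (h : Iso G G') {u w : ℕ} (hu : u ∈ G'.verts)
    (hw : w ∈ G'.verts) : ∃ u' ∈ G.verts, ∃ w' ∈ G.verts, G.bnd u' = G'.bnd u ∧
      G.bnd w' = G'.bnd w ∧ Iso (contract G u' w') (contract G' u w) := by
  obtain ⟨f, hf, hfa, hfl, hfb⟩ := h
  obtain ⟨u', hu', rfl⟩ := hf.surjOn hu
  obtain ⟨w', hw', rfl⟩ := hf.surjOn hw
  refine ⟨u', hu', w', hw', (hfb u' hu').symm, (hfb w' hw').symm, f, hf.sdiff_singleton hw',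
    fun a ha b hb => ?_, fun x hx => ?_, fun x hx => ?_⟩
  · simp only [contract, ne_eq, hf.injOn.eq_iff ha.1 hw', hf.injOn.eq_iff hb.1 hw',
      hf.injOn.eq_iff ha.1 hu', hf.injOn.eq_iff hb.1 hu', hfa a ha.1 b hb.1,
      hfa w' hw' b hb.1, hfa a ha.1 w' hw']
  · simp only [contract, hf.injOn.eq_iff hx.1 hu', hfl x hx.1, hfl u' hu', hfl w' hw']
  · simp only [contract, hf.injOn.eq_iff hx.1 hw', hfb x hx.1]

lemma interior_contract {G : BLG X} {u w : ℕ} (hw : G.bnd w ≠ none) :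
    interior (contract G u w) = interior G := by
  ext x
  by_cases hxw : x = w
  · subst hxw
    simp [interior, contract, hw]
  · simp [interior, contract, hxw]

lemma mem_pcs_contract {G p : BLG X} {u w j : ℕ} (hG : IsSimple G) (hw : w ∈ G.verts)
    (hbu : G.bnd u ≠ none) (hbw : G.bnd w = some j) (hp : p ∈ pcs G)
    (hav : ∀ x, p.bnd x ≠ some j) : p ∈ pcs (contract G u w) := by
  refine mem_pcs_of_agree (G' := contract G u w) hbw (fun x hx hxw => ⟨hx, hxw⟩)
    (fun x hxw => if_neg hxw) (fun x _ => ?_) (fun a b h ha hb => ⟨ha, hb, Or.inl h⟩)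
    (fun C hC hwC => ?_) hp hav
  · show G.label x ⊆ if x = u then G.label u ∪ G.label w else G.label x
    split_ifs with hxu
    · exact hxu ▸ Set.subset_union_left
    · exact subset_rfl
  have hCint : C ⊆ interior G := by
    obtain ⟨_, _, rfl⟩ := hC
    exact fun _ h => h.1
  have hCu : ∀ c ∈ C, c ≠ u := fun c hc hcu => hbu (hcu ▸ (hCint hc).2)
  have hCw : ∀ c ∈ C, c ≠ w := fun c hc hcw => hwC (Or.inl (hcw ▸ hc))
  have hwc : ∀ c ∈ C, ¬ G.Adj w c := fun c hc hwc =>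
    hwC (Or.inr ⟨hw, by simp [hbw], c, hc, hwc⟩)
  have hcw : ∀ c ∈ C, ¬ G.Adj c w := fun c hc hcw =>
    hwc c hc (hG.symm c (hCint hc).1 w hw hcw)
  have hadj : ∀ c ∈ C, ∀ x, (G.Adj c x ↔ (contract G u w).Adj c x) ∧
      (G.Adj x c ↔ (contract G u w).Adj x c) := by
    intro c hc x
    by_cases hxw : x = w
    · subst hxw
      simp [contract, hwc c hc, hcw c hc]
    · simp [contract, hxw, hCw c hc, hCu c hc, hwc c hc, hcw c hc]
  refine ⟨?_, compPc_congr hadj (fun c hc => (if_neg (hCu c hc)).symm)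
    (fun c hc => (if_neg (hCw c hc)).symm) fun x c hc hxc => ?_⟩
  · have hne : ∀ x ∈ interior G, x ≠ u ∧ x ≠ w := fun x hx =>
      ⟨fun hxu => hbu (hxu ▸ hx.2), fun hxw => by simp [← hxw, hx.2] at hbw⟩
    rw [interior_contract (by simp [hbw])]
    refine hC.of_subset subset_rfl (fun a ha b hb => ?_) fun _ _ _ hb _ => hb
    simp [contract, (hne a ha).1, (hne a ha).2, (hne b hb).1, (hne b hb).2]
  · have hxw : x ≠ w := fun hxw => hwc c hc (hxw ▸ hxc)
    exact ⟨⟨fun hx => ⟨hx, hxw⟩, fun hx => hx.1⟩, (if_neg hxw).symm⟩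

lemma exists_iso_subset_pcs_of_extOne {s : ℕ} {G G' : BLG X} {P : Set (BLG X)}
    (hG : IsSimple G) (hstep : ExtOne s G G') (hP : P ⊆ pcs G')
    (hav : ∀ p ∈ P, ∀ x, p.bnd x ≠ some (s + 1)) : ∃ G₀, Iso G₀ G ∧ P ⊆ pcs G₀ := by
  have hG' := hG.of_extOne hstep
  rcases hstep with hiso | ⟨v, hv, hbv, hiso⟩ | ⟨u, hu, i, hbu, w, hw, ME, ML, hiso⟩
  · exact ⟨G', hiso, hP⟩
  · obtain ⟨v', hv', hbv', hiso'⟩ := hiso.exists_clearBnd (v := v) hv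
    rw [clearBnd_assignBnd hbv] at hiso'
    have hbv'' : G'.bnd v' = some (s + 1) := by simp [hbv', assignBnd]
    exact ⟨clearBnd G' v', hiso', fun p hp => mem_pcs_clearBnd hG' hv' hbv'' (hP hp) (hav p hp)⟩
  · have hwu : w ≠ u := fun h => hw (h ▸ hu)
    obtain ⟨u', -, w', hw', hbu', hbw', hiso'⟩ :=
      hiso.exists_contract (Set.mem_insert_of_mem _ hu) (Set.mem_insert _ _)
    have hbu'' : G'.bnd u' ≠ none := by simp [hbu', splitVx, hwu.symm, hbu]
    have hbw'' : G'.bnd w' = some (s + 1) := by simp [hbw', splitVx]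
    exact ⟨contract G' u' w', hiso'.trans (iso_contract_splitVx hG hu hw),
      fun p hp => mem_pcs_contract hG' hw' hbu'' hbw'' (hP hp) (hav p hp)⟩

lemma mem_mpcsPlus_singleton {t : ℕ} {G H : BLG X} :
    H ∈ mpcsPlus t {G} ↔ ∃ G', ExtN 0 t G G' ∧ H ∈ mpcs G' := by
  simp [mpcsPlus, mpcsSet, extSet]

/-- For an unboundaried `X`-labeled graph `G` and a `t`-boundaried
`X`-labeled graph `H`: `H ∈ mpcs_{+(t+1)}(G)` iff `H ∈ mpcs_{+t}(G)`. -/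
theorem stmt11 {X : Type} (t : ℕ) (G H : BLG X) (hG : G.WF 0) (hH : H.WF t) :
    H ∈ mpcsPlus (t + 1) {G} ↔ H ∈ mpcsPlus t {G} := by
  simp only [mem_mpcsPlus_singleton]
  constructor
  · rintro ⟨G', ⟨G₀, hext, hstep⟩, P, hP, hPne, hIso⟩
    rw [Nat.zero_add] at hstep
    obtain ⟨G₁, hiso, hP₁⟩ := exists_iso_subset_pcs_of_extOne (hG.isSimple.of_extN hext) hstep hP
      fun p hp => bnd_ne_of_iso_unionOf hH hP hIso hp
    exact ⟨G₁, hext.of_iso hiso, P, hP₁, hPne, hIso⟩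
  · rintro ⟨G', hext, hmem⟩
    exact ⟨G', ⟨G', hext, Or.inl (Iso.refl G')⟩, hmem⟩

end

end FDel
end
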